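/- arXiv:2205.04982 — 3 statements merged into one kernel-verified Lean document; each statement's English description precedes it below -/
import Mathlib

section
/- For any measurable function T : C × X → ℝ, the quantity E_{p(c,x)}[-sp(-T(c,x))] - E_{p(c)p(x)}[sp(T(c,x))], where sp(r) = log(1 + e^r), is a lower bound of the mutual information I(c;x) (for finite discrete c, x). -/
open Real

def IsPMF {S : Type*} [Fintype S] (p : S → ℝ) : Prop :=
  (∀ s, 0 ≤ p s) ∧ ∑ s, p s = 1

noncomputable def margA {A C : Type*} [Fintype A] [Fintype C] (p : A × C → ℝ) (a : A) : ℝ :=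
  ∑ c, p (a, c)

noncomputable def margC {A C : Type*} [Fintype A] [Fintype C] (p : A × C → ℝ) (c : C) : ℝ :=
  ∑ a, p (a, c)

/-- Mutual information of a joint pmf on `A × C` (convention `0 * log _ = 0`). -/
noncomputable def MI {A C : Type*} [Fintype A] [Fintype C] (p : A × C → ℝ) : ℝ :=
  ∑ a, ∑ c, p (a, c) * Real.log (p (a, c) / (margA p a * margC p c))

/-- Shannon entropy of a pmf. -/
noncomputable def entropy {S : Type*} [Fintype S] (q : S → ℝ) : ℝ :=
  -∑ s, q s * Real.log (q s)

/-- Conditional entropy `H(c|a)` for a joint pmf on `A × C`. -/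
noncomputable def condH {A C : Type*} [Fintype A] [Fintype C] (p : A × C → ℝ) : ℝ :=
  -∑ a, ∑ c, p (a, c) * Real.log (p (a, c) / margA p a)

/-- Kullback–Leibler divergence on a finite set (convention `0 * log _ = 0`). -/
noncomputable def KL {S : Type*} [Fintype S] (P Q : S → ℝ) : ℝ :=
  ∑ s, P s * Real.log (P s / Q s)

/-- Jensen–Shannon divergence. -/
noncomputable def JSD {S : Type*} [Fintype S] (P Q : S → ℝ) : ℝ :=
  (1/2) * KL P (fun s => (P s + Q s) / 2) + (1/2) * KL Q (fun s => (P s + Q s) / 2)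

/-- Softplus. -/
noncomputable def sp (r : ℝ) : ℝ := Real.log (1 + Real.exp r)

/-- GAN value function for discriminator `U` on joint `p` with product of marginals. -/
noncomputable def Vgan {A C : Type*} [Fintype A] [Fintype C] (p U : A × C → ℝ) : ℝ :=
  (∑ a, ∑ c, p (a, c) * Real.log (U (a, c))) +
  (∑ a, ∑ c, (margA p a * margC p c) * Real.log (1 - U (a, c)))

/-!
Writing `σ` for the logistic sigmoid, `-sp (-t) = log (σ t)` and `sp t = -log (1 - σ t)`, so each
term of the bound is `p log u + q log (1 - u)` with `u = σ t ∈ (0, 1)`. Two applications of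
`log x ≤ x - 1`, to `x = u q / p` and to `x = 1 - u`, bound this by `p log (p / q) - p`; summing
with `q = p(c) p(x)` gives `KL (p(c, x) ‖ p(c) p(x)) = I(c; x)`.
-/

lemma neg_sp_neg_eq_log_sigmoid (t : ℝ) : -sp (-t) = log (sigmoid t) := by
  rw [sp, sigmoid_def, log_inv]

lemma sp_eq_neg_log_one_sub_sigmoid (t : ℝ) : sp t = -log (1 - sigmoid t) := by
  rw [← sigmoid_neg, sigmoid_def, neg_neg, log_inv, neg_neg, sp]

lemma mul_log_le_mul_log_div_add {p q u : ℝ} (hp : 0 ≤ p) (hq : 0 ≤ q) (hpq : 0 < p → 0 < q)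
    (hu : 0 < u) : p * log u ≤ p * log (p / q) + (u * q - p) := by
  rcases hp.eq_or_lt with rfl | hp
  · simpa using mul_nonneg hu.le hq
  have hq := hpq hp
  calc p * log u = p * log (p / q) + p * log (u * q / p) := by
        rw [← mul_add, ← log_mul (by positivity) (by positivity)]
        field_simp
    _ ≤ p * log (p / q) + p * (u * q / p - 1) := by
      gcongr
      exact log_le_sub_one_of_pos (by positivity)
    _ = p * log (p / q) + (u * q - p) := by field_simp

lemma mul_neg_sp_neg_sub_mul_sp_le {p q : ℝ} (hp : 0 ≤ p) (hq : 0 ≤ q) (hpq : 0 < p → 0 < q)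
    (t : ℝ) : p * (-sp (-t)) - q * sp t ≤ p * log (p / q) := by
  rw [neg_sp_neg_eq_log_sigmoid, sp_eq_neg_log_one_sub_sigmoid]
  have hu := sigmoid_pos t
  have hlog_joint := mul_log_le_mul_log_div_add hp hq hpq hu
  have hlog_prod : q * log (1 - sigmoid t) ≤ q * (1 - sigmoid t - 1) :=
    mul_le_mul_of_nonneg_left (log_le_sub_one_of_pos (by linarith [sigmoid_lt_one t])) hq
  linarith

lemma sum_mul_neg_sp_neg_sub_sum_mul_sp_le_KL {S : Type*} [Fintype S] {P Q : S → ℝ}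
    (hP : ∀ s, 0 ≤ P s) (hQ : ∀ s, 0 ≤ Q s) (hPQ : ∀ s, 0 < P s → 0 < Q s) (T : S → ℝ) :
    ∑ s, P s * (-sp (-T s)) - ∑ s, Q s * sp (T s) ≤ KL P Q := by
  rw [← Finset.sum_sub_distrib, KL]
  exact Finset.sum_le_sum fun s _ => mul_neg_sp_neg_sub_mul_sp_le (hP s) (hQ s) (hPQ s) (T s)

/-- DeepInfomax lower bound on mutual information: for any `T`,
`E_{p(c,x)}[-sp(-T)] - E_{p(c)p(x)}[sp(T)] ≤ I(c;x)`. -/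
theorem deep_infomax_lower_bound {C X : Type*} [Fintype C] [Fintype X]
    (p : C × X → ℝ) (hp : IsPMF p)
    (hpos : ∀ c x, 0 < p (c, x) → 0 < margA p c * margC p x)
    (T : C × X → ℝ) :
    (∑ c, ∑ x, p (c, x) * (-sp (-T (c, x)))) -
      (∑ c, ∑ x, (margA p c * margC p x) * sp (T (c, x))) ≤ MI p := by
  obtain ⟨hp_nonneg, -⟩ := hp
  have hmarg_nonneg (z : C × X) : 0 ≤ margA p z.1 * margC p z.2 :=
    mul_nonneg (Finset.sum_nonneg fun _ _ => hp_nonneg _) (Finset.sum_nonneg fun _ _ => hp_nonneg _)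
  have hKL := sum_mul_neg_sp_neg_sub_sum_mul_sp_le_KL hp_nonneg hmarg_nonneg
    (fun z => hpos z.1 z.2) T
  simpa only [KL, MI, Fintype.sum_prod_type] using hKL
end

section
/- The Donsker–Varadhan inequality: for finite probability distributions P and Q on a finite set with Q positive, and any function T, KL(P||Q) ≥ E_P[T] - log E_Q[e^T]. -/
open Real

/-!
Tilting `Q` by `e^T` gives the Gibbs distribution `G ∝ Q e^T`, and
`KL(P‖G) = KL(P‖Q) - E_P[T] + log E_Q[e^T]`. The inequality is therefore Gibbs' inequality
`KL(P‖G) ≥ 0`, which in turn follows termwise from `p log (p/q) ≥ p - q`.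
-/

lemma sub_le_mul_log_div {p q : ℝ} (hp : 0 ≤ p) (hq : 0 < q) : p - q ≤ p * log (p / q) :=
  calc p - q = q * (p / q - 1) := by field_simp
    _ ≤ q * (p / q * log (p / q)) :=
      mul_le_mul_of_nonneg_left (self_sub_one_le_mul_log (div_nonneg hp hq.le)) hq.le
    _ = p * log (p / q) := by field_simp

lemma KL_nonneg_of_sum_le {S : Type*} [Fintype S] {P Q : S → ℝ} (hP : ∀ s, 0 ≤ P s)
    (hQ : ∀ s, 0 < Q s) (hsum : ∑ s, Q s ≤ ∑ s, P s) : 0 ≤ KL P Q :=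
  calc 0 ≤ ∑ s, (P s - Q s) := by rw [Finset.sum_sub_distrib]; linarith
    _ ≤ KL P Q := Finset.sum_le_sum fun s _ ↦ sub_le_mul_log_div (hP s) (hQ s)

noncomputable def gibbs {S : Type*} [Fintype S] (Q T : S → ℝ) (s : S) : ℝ :=
  Q s * exp (T s) / ∑ t, Q t * exp (T t)

section Gibbs

variable {S : Type*} [Fintype S] {Q : S → ℝ}

lemma partition_pos (hQ : ∀ s, 0 < Q s) (T : S → ℝ) (s : S) : 0 < ∑ t, Q t * exp (T t) :=
  Finset.sum_pos (fun t _ ↦ mul_pos (hQ t) (exp_pos _)) ⟨s, Finset.mem_univ s⟩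

lemma gibbs_pos (hQ : ∀ s, 0 < Q s) (T : S → ℝ) (s : S) : 0 < gibbs Q T s :=
  div_pos (mul_pos (hQ s) (exp_pos _)) (partition_pos hQ T s)

lemma sum_gibbs [Nonempty S] (hQ : ∀ s, 0 < Q s) (T : S → ℝ) : ∑ s, gibbs Q T s = 1 := by
  obtain ⟨s⟩ := ‹Nonempty S›
  simp only [gibbs]
  rw [← Finset.sum_div, div_self (partition_pos hQ T s).ne']

lemma mul_log_div_gibbs (P : S → ℝ) (hQ : ∀ s, 0 < Q s) (T : S → ℝ) (s : S) :
    P s * log (P s / gibbs Q T s) =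
      P s * log (P s / Q s) - P s * T s + P s * log (∑ t, Q t * exp (T t)) := by
  rcases eq_or_ne (P s) 0 with hPs | hPs
  · simp [hPs]
  have hQs := (hQ s).ne'
  rw [log_div hPs (gibbs_pos hQ T s).ne', gibbs, log_div hPs hQs,
    log_div (mul_ne_zero hQs (exp_ne_zero _)) (partition_pos hQ T s).ne',
    log_mul hQs (exp_ne_zero _), log_exp]
  ring

lemma KL_gibbs (P : S → ℝ) (hQ : ∀ s, 0 < Q s) (T : S → ℝ) :
    KL P (gibbs Q T) =
      KL P Q - ∑ s, P s * T s + (∑ s, P s) * log (∑ t, Q t * exp (T t)) := by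
  simp only [KL, mul_log_div_gibbs P hQ T, Finset.sum_add_distrib, Finset.sum_sub_distrib,
    Finset.sum_mul]

end Gibbs

theorem donsker_varadhan_general {S : Type*} [Fintype S]
    (P Q : S → ℝ) (hP : IsPMF P) (hQpos : ∀ s, 0 < Q s)
    (T : S → ℝ) :
    (∑ s, P s * T s) - Real.log (∑ s, Q s * Real.exp (T s)) ≤ KL P Q := by
  have : Nonempty S := by
    by_contra hS
    rw [not_nonempty_iff] at hS
    simpa using hP.2
  have hG : ∑ s, gibbs Q T s ≤ ∑ s, P s := by rw [sum_gibbs hQpos, hP.2]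
  calc (∑ s, P s * T s) - log (∑ s, Q s * exp (T s)) = KL P Q - KL P (gibbs Q T) := by
        rw [KL_gibbs P hQpos, hP.2]; ring
    _ ≤ KL P Q := sub_le_self _ (KL_nonneg_of_sum_le hP.1 (gibbs_pos hQpos T) hG)

/-- Donsker–Varadhan inequality. -/
theorem donsker_varadhan {S : Type*} [Fintype S]
    (P Q : S → ℝ) (hP : IsPMF P) (hQ : IsPMF Q) (hQpos : ∀ s, 0 < Q s)
    (T : S → ℝ) :
    (∑ s, P s * T s) - Real.log (∑ s, Q s * Real.exp (T s)) ≤ KL P Q :=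
  donsker_varadhan_general P Q hP hQpos T
end

section
/- With the optimal discriminator plugged in, the GAN objective equals -log 4 + 2·JSD(p(a,c) || p(a)p(c)), where JSD is the Jensen–Shannon divergence; consequently the minimum over the generator (i.e., over joint distributions with fixed marginals) of max_U V(U) is -log 4, attained exactly when p(a,c) = p(a)p(c). -/
open Real

/-!
Pointwise, `x log (x/(x+y)) + y log (y/(x+y))` differs from
`x log (x/m) + y log (y/m)`, `m = (x+y)/2`, by `(x+y) log 2`; summing over a pair of
probability vectors `P, Q` turns the value at the optimal discriminator `P/(P+Q)` into
`KL(P‖M) + KL(Q‖M) - log 4 = 2 JSD(P‖Q) - log 4`. Gibbs' inequality, in the form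
`x log (x/m) + m - x = m · klFun (x/m) ≥ 0` with equality iff `x = m`, gives `JSD ≥ 0` with
equality iff `P = Q`; for the joint law and the product of its marginals this is independence.
-/

open Finset InformationTheory

section Gibbs

lemma mul_log_div_add_sub_nonneg {x m : ℝ} (hx : 0 ≤ x) (hm : 0 ≤ m) (hxm : m = 0 → x = 0) :
    0 ≤ x * log (x / m) + m - x := by
  rcases hm.eq_or_lt with rfl | hm
  · simp [hxm rfl]
  have h := mul_nonneg hm.le (klFun_nonneg (div_nonneg hx hm.le))
  rwa [klFun_apply, mul_sub, mul_add, ← mul_assoc, mul_div_cancel₀ _ hm.ne', mul_one] at h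

lemma mul_log_div_add_sub_eq_zero_iff {x m : ℝ} (hx : 0 ≤ x) (hm : 0 ≤ m)
    (hxm : m = 0 → x = 0) : x * log (x / m) + m - x = 0 ↔ x = m := by
  rcases hm.eq_or_lt with rfl | hm
  · simp [hxm rfl]
  have h := klFun_eq_zero_iff (div_nonneg hx hm.le)
  rwa [div_eq_one_iff_eq hm.ne', ← mul_eq_zero_iff_left hm.ne', klFun_apply, mul_sub, mul_add,
    ← mul_assoc, mul_div_cancel₀ _ hm.ne', mul_one] at h

variable {S : Type*} [Fintype S] {P Q : S → ℝ}

lemma KL_eq_sum_mul_log_div_add_sub (hPQ : ∑ s, P s = ∑ s, Q s) :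
    KL P Q = ∑ s, (P s * log (P s / Q s) + Q s - P s) := by
  rw [sum_sub_distrib, sum_add_distrib, hPQ, add_sub_cancel_right, KL]

lemma KL_nonneg (hP : ∀ s, 0 ≤ P s) (hQ : ∀ s, 0 ≤ Q s) (hQP : ∀ s, Q s = 0 → P s = 0)
    (hPQ : ∑ s, P s = ∑ s, Q s) : 0 ≤ KL P Q := by
  rw [KL_eq_sum_mul_log_div_add_sub hPQ]
  exact sum_nonneg fun s _ => mul_log_div_add_sub_nonneg (hP s) (hQ s) (hQP s)

lemma KL_eq_zero_iff (hP : ∀ s, 0 ≤ P s) (hQ : ∀ s, 0 ≤ Q s) (hQP : ∀ s, Q s = 0 → P s = 0)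
    (hPQ : ∑ s, P s = ∑ s, Q s) : KL P Q = 0 ↔ P = Q := by
  rw [KL_eq_sum_mul_log_div_add_sub hPQ,
    sum_eq_zero_iff_of_nonneg fun s _ => mul_log_div_add_sub_nonneg (hP s) (hQ s) (hQP s),
    funext_iff]
  exact forall_congr' fun s => by
    simpa using mul_log_div_add_sub_eq_zero_iff (hP s) (hQ s) (hQP s)

lemma KL_self (P : S → ℝ) : KL P P = 0 := by
  refine sum_eq_zero fun s _ => ?_
  rcases eq_or_ne (P s) 0 with h | h <;> simp [h]

end Gibbs

section JensenShannon

variable {S : Type*} [Fintype S] {P Q : S → ℝ}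

lemma KL_midpoint_nonneg (hP : ∀ s, 0 ≤ P s) (hQ : ∀ s, 0 ≤ Q s)
    (hPQ : ∑ s, P s = ∑ s, Q s) :
    0 ≤ KL P (fun s => (P s + Q s) / 2) ∧ (KL P (fun s => (P s + Q s) / 2) = 0 ↔ P = Q) := by
  have hM : ∀ s, 0 ≤ (P s + Q s) / 2 := fun s => by linarith [hP s, hQ s]
  have hMP : ∀ s, (P s + Q s) / 2 = 0 → P s = 0 := fun s h => by linarith [hP s, hQ s]
  have hsum : ∑ s, P s = ∑ s, (P s + Q s) / 2 := by
    rw [← sum_div, sum_add_distrib, hPQ]; ring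
  refine ⟨KL_nonneg hP hM hMP hsum, ?_⟩
  rw [KL_eq_zero_iff hP hM hMP hsum, funext_iff, funext_iff]
  exact forall_congr' fun s => by constructor <;> intro h <;> linarith

lemma JSD_nonneg (hP : ∀ s, 0 ≤ P s) (hQ : ∀ s, 0 ≤ Q s) (hPQ : ∑ s, P s = ∑ s, Q s) :
    0 ≤ JSD P Q := by
  have hP0 := (KL_midpoint_nonneg hP hQ hPQ).1
  have hQ0 := (KL_midpoint_nonneg hQ hP hPQ.symm).1
  simp only [add_comm (Q _)] at hQ0
  unfold JSD
  positivity

lemma JSD_eq_zero_iff (hP : ∀ s, 0 ≤ P s) (hQ : ∀ s, 0 ≤ Q s) (hPQ : ∑ s, P s = ∑ s, Q s) :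
    JSD P Q = 0 ↔ P = Q := by
  refine ⟨fun h => ?_, fun h => by simp [h, JSD, KL_self]⟩
  obtain ⟨hP0, hPiff⟩ := KL_midpoint_nonneg hP hQ hPQ
  obtain ⟨hQ0, -⟩ := KL_midpoint_nonneg hQ hP hPQ.symm
  simp only [JSD, add_comm (Q _)] at h hQ0
  exact hPiff.1 (by linarith)

end JensenShannon

section OptimalDiscriminator

lemma mul_log_div_half_add (x : ℝ) {s : ℝ} (hs : s ≠ 0) :
    x * log (x / (s / 2)) = x * log (x / s) + x * log 2 := by
  rcases eq_or_ne x 0 with rfl | hx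
  · simp
  rw [div_div_eq_mul_div, mul_comm x 2, mul_div_assoc,
    log_mul two_ne_zero (div_ne_zero hx hs)]
  ring

lemma mul_log_optimal_discriminator {x y : ℝ} (hx : 0 ≤ x) (hy : 0 ≤ y) :
    x * log (x / (x + y)) + y * log (1 - x / (x + y))
      = x * log (x / ((x + y) / 2)) + y * log (y / ((x + y) / 2)) - (x + y) * log 2 := by
  rcases (add_nonneg hx hy).eq_or_lt with hxy | hxy
  · obtain ⟨rfl, rfl⟩ : x = 0 ∧ y = 0 := ⟨by linarith, by linarith⟩
    simp
  rw [mul_log_div_half_add x hxy.ne', mul_log_div_half_add y hxy.ne',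
    one_sub_div hxy.ne', add_sub_cancel_left]
  ring

variable {S : Type*} [Fintype S] {P Q : S → ℝ}

lemma sum_log_optimal_discriminator (hP : IsPMF P) (hQ : IsPMF Q) :
    ∑ s, P s * log (P s / (P s + Q s)) + ∑ s, Q s * log (1 - P s / (P s + Q s))
      = -log 4 + 2 * JSD P Q := by
  have hlog4 : log 4 = 2 * log 2 := by
    rw [show (4 : ℝ) = 2 ^ 2 by norm_num, log_pow, Nat.cast_ofNat]
  rw [← sum_add_distrib,
    sum_congr rfl fun s _ => mul_log_optimal_discriminator (hP.1 s) (hQ.1 s),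
    sum_sub_distrib, sum_add_distrib, ← sum_mul, sum_add_distrib, hP.2, hQ.2, hlog4]
  simp only [JSD, KL]
  ring

end OptimalDiscriminator

section Marginals

variable {A C : Type*} [Fintype A] [Fintype C] {p : A × C → ℝ}

lemma IsPMF.margA (hp : IsPMF p) : IsPMF (margA p) :=
  ⟨fun _ => sum_nonneg fun _ _ => hp.1 _, by rw [← hp.2, Fintype.sum_prod_type]; rfl⟩

lemma IsPMF.margC (hp : IsPMF p) : IsPMF (margC p) :=
  ⟨fun _ => sum_nonneg fun _ _ => hp.1 _,
    by rw [← hp.2, Fintype.sum_prod_type, sum_comm]; rfl⟩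

lemma IsPMF.prod {μ : A → ℝ} {ν : C → ℝ} (hμ : IsPMF μ) (hν : IsPMF ν) :
    IsPMF (fun x : A × C => μ x.1 * ν x.2) :=
  ⟨fun x => mul_nonneg (hμ.1 x.1) (hν.1 x.2),
    by rw [Fintype.sum_prod_type, ← sum_mul_sum, hμ.2, hν.2, mul_one]⟩

lemma Vgan_eq_sum (p U : A × C → ℝ) :
    Vgan p U = ∑ x, p x * log (U x) + ∑ x, margA p x.1 * margC p x.2 * log (1 - U x) := by
  simp only [Vgan, Fintype.sum_prod_type]

end Marginals

/-- with the optimal discriminator, the GAN objective equals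
`-log 4 + 2·JSD(p(a,c) || p(a)p(c))`; its minimum over the generator is `-log 4`,
attained exactly when `p(a,c) = p(a)p(c)` (Theorem 1 of the paper). -/
theorem gan_objective_jsd {A C : Type*} [Fintype A] [Fintype C]
    (p : A × C → ℝ) (hp : IsPMF p) :
    let q : A × C → ℝ := fun x => margA p x.1 * margC p x.2
    let Ustar : A × C → ℝ := fun x => p x / (p x + q x)
    Vgan p Ustar = -Real.log 4 + 2 * JSD p q ∧
    -Real.log 4 ≤ Vgan p Ustar ∧
    (Vgan p Ustar = -Real.log 4 ↔ ∀ a c, p (a, c) = margA p a * margC p c) := by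
  intro q Ustar
  have hq : IsPMF q := hp.margA.prod hp.margC
  have hV : Vgan p Ustar = -log 4 + 2 * JSD p q :=
    (Vgan_eq_sum p Ustar).trans (sum_log_optimal_discriminator hp hq)
  have hJSD := JSD_nonneg hp.1 hq.1 (hp.2.trans hq.2.symm)
  refine ⟨hV, by linarith, ?_⟩
  rw [hV, add_eq_left, mul_eq_zero_iff_left two_ne_zero,
    JSD_eq_zero_iff hp.1 hq.1 (hp.2.trans hq.2.symm), funext_iff, Prod.forall]
end
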